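/- Two ordinary vertices u and w of a first-level auxiliary graph G_r are 2-edge-connected in G_r if and only if they are 2-edge-connected in G; consequently every 2-edge-connected block of G is contained in the vertex set of a single tree of the canonical decomposition of the dominator tree D(s). -/

import Mathlib

variable {V : Type*}

/-- A walk in a digraph given by its edge set `E`, recorded as a list of edges. -/
inductive IsWalk (E : Set (V × V)) : V → V → List (V × V) → Prop
  | nil (u : V) : IsWalk E u u []
  | cons {u v w : V} {p : List (V × V)} (h : (u, v) ∈ E) (hp : IsWalk E v w p) :
      IsWalk E u w ((u, v) :: p)

def Reaches (E : Set (V × V)) (u v : V) : Prop := ∃ p, IsWalk E u v p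

def StronglyConnected (E : Set (V × V)) : Prop := ∀ u v : V, Reaches E u v

/-- Two edge-disjoint directed paths from `u` to `v`. -/
def TwoEDP (E : Set (V × V)) (u v : V) : Prop :=
  ∃ p q, IsWalk E u v p ∧ IsWalk E u v q ∧ p.Disjoint q

/-- `u` and `v` are 2-edge-connected. -/
def TwoEC (E : Set (V × V)) (u v : V) : Prop := TwoEDP E u v ∧ TwoEDP E v u

/-- A 2-edge-connected block: a maximal set of pairwise 2-edge-connected vertices. -/
def Is2ECBlock (E : Set (V × V)) (B : Set V) : Prop :=
  (∀ u ∈ B, ∀ v ∈ B, TwoEC E u v) ∧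
    ∀ C : Set V, B ⊆ C → (∀ u ∈ C, ∀ v ∈ C, TwoEC E u v) → C = B

def SameBlocks (E E' : Set (V × V)) : Prop :=
  ∀ B : Set V, Is2ECBlock E B ↔ Is2ECBlock E' B

/-- A strong bridge: an edge whose removal increases the number of strongly
connected components, i.e. destroys the mutual reachability of some pair. -/
def IsStrongBridge (E : Set (V × V)) (e : V × V) : Prop :=
  e ∈ E ∧ ∃ u v : V, (Reaches E u v ∧ Reaches E v u) ∧
    ¬ (Reaches (E \ {e}) u v ∧ Reaches (E \ {e}) v u)

/-- A 2-edge-connected digraph: strongly connected and stays so after deleting any edge. -/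
def Is2ECGraph (E : Set (V × V)) : Prop :=
  StronglyConnected E ∧ ∀ e ∈ E, StronglyConnected (E \ {e})

/-- Edges of `E` induced on the vertex set `C`. -/
def restrictE (E : Set (V × V)) (C : Set V) : Set (V × V) :=
  {e ∈ E | e.1 ∈ C ∧ e.2 ∈ C}

def SCOn (E' : Set (V × V)) (C : Set V) : Prop :=
  ∀ u ∈ C, ∀ v ∈ C, Reaches E' u v

/-- `E'` is a 2-edge-connected (spanning sub)graph on the vertex set `C`. -/
def Is2ECOn (E' : Set (V × V)) (C : Set V) : Prop :=
  SCOn E' C ∧ ∀ e ∈ E', SCOn (E' \ {e}) C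

/-- A 2-edge-connected component: a maximal vertex set inducing a 2-edge-connected subgraph. -/
def Is2ECComponent (E : Set (V × V)) (C : Set V) : Prop :=
  Is2ECOn (restrictE E C) C ∧
    ∀ D : Set V, C ⊆ D → Is2ECOn (restrictE E D) D → D = C

/-- A solution to 2EC-B: a strongly connected spanning subgraph with the same
2-edge-connected blocks. -/
def IsSolutionB (E E' : Set (V × V)) : Prop :=
  E' ⊆ E ∧ StronglyConnected E' ∧ SameBlocks E' E

/-- The reverse digraph. -/
def revE (E : Set (V × V)) : Set (V × V) := {e | (e.2, e.1) ∈ E}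

/-- A bridge of the flow graph with start vertex `s`: an edge contained in every
walk from `s` to its head. -/
def IsBridge (E : Set (V × V)) (s : V) (e : V × V) : Prop :=
  e ∈ E ∧ ∀ p, IsWalk E s e.2 p → e ∈ p

/-- `u` is a vertex of the walk `p` starting at `s`. -/
def OnWalk (s : V) (p : List (V × V)) (u : V) : Prop :=
  u = s ∨ ∃ e ∈ p, e.2 = u

/-- `u` dominates `w` in the flow graph with start `s`. -/
def Dom (E : Set (V × V)) (s u w : V) : Prop :=
  ∀ p, IsWalk E s w p → OnWalk s p u

def PDom (E : Set (V × V)) (s u w : V) : Prop := Dom E s u w ∧ u ≠ w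

/-- `u` is the immediate dominator of `w`. -/
def Idom (E : Set (V × V)) (s u w : V) : Prop :=
  PDom E s u w ∧ ∀ x, PDom E s x w → Dom E s x u

/-- Marked vertices: roots of the trees of the canonical decomposition of the
dominator tree, i.e. `s` and the heads of bridges of `G(s)`. -/
def Marked (E : Set (V × V)) (s r : V) : Prop :=
  r = s ∨ ∃ e, IsBridge E s e ∧ e.2 = r

/-- `w` belongs to the tree `T(r)` of the canonical decomposition:
`r` is the nearest marked dominator of `w`. -/
def InTree (E : Set (V × V)) (s r w : V) : Prop :=
  Marked E s r ∧ Dom E s r w ∧ ∀ x, Marked E s x → Dom E s x w → Dom E s x r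

/-- A spanning tree of the flow graph `G(s)` rooted at `s`. -/
def IsSpanningTree (E : Set (V × V)) (s : V) (T : Set (V × V)) : Prop :=
  T ⊆ E ∧ (∀ v, Reaches T s v) ∧ (∀ v, v ≠ s → ∃! e, e ∈ T ∧ e.2 = v) ∧
    ∀ e ∈ T, e.2 ≠ s

/-- Two independent spanning trees: for every `v`, the two tree paths from `s`
to `v` share only dominators of `v`. -/
def IndependentTrees (E : Set (V × V)) (s : V) (T₁ T₂ : Set (V × V)) : Prop :=
  IsSpanningTree E s T₁ ∧ IsSpanningTree E s T₂ ∧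
    ∀ v p q, IsWalk T₁ s v p → IsWalk T₂ s v q →
      ∀ u, OnWalk s p u → OnWalk s q u → Dom E s u v

/-- The contraction map defining the first-level auxiliary graph `G_r`:
vertices of `T(r)` stay put, descendants of a marked child `x` of a boundary
vertex of `T(r)` are contracted into `x`, and non-descendants of `r` are
contracted into `d(r)`. -/
def ContractsTo (E : Set (V × V)) (s r v x : V) : Prop :=
  (InTree E s r v ∧ x = v) ∨
  (Dom E s r v ∧ ¬ InTree E s r v ∧ Marked E s x ∧ Dom E s x v ∧
    ∃ u, InTree E s r u ∧ Idom E s u x) ∨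
  (¬ Dom E s r v ∧ Idom E s x r)

/-- The edge set of the first-level auxiliary graph `G_r`. -/
def AuxE (E : Set (V × V)) (s r : V) : Set (V × V) :=
  {e | ∃ a b, (a, b) ∈ E ∧ ContractsTo E s r a e.1 ∧ ContractsTo E s r b e.2}

def cutEdges (E : Set (V × V)) (U W : Set V) : Set (V × V) :=
  {e ∈ E | e.1 ∈ U ∧ e.2 ∈ W}

def IsCut (u w : V) (U W : Set V) : Prop := u ∈ U ∧ w ∈ W ∧ Disjoint U W

def IsMinCut (E : Set (V × V)) (u w : V) (U W : Set V) : Prop :=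
  IsCut u w U W ∧ ∀ U' W' : Set V, IsCut u w U' W' →
    (cutEdges E U W).ncard ≤ (cutEdges E U' W').ncard

/-- There exist `k` pairwise edge-disjoint walks from `u` to `w`. -/
def HasEDP (E : Set (V × V)) (u w : V) (k : ℕ) : Prop :=
  ∃ P : Fin k → List (V × V), (∀ i, IsWalk E u w (P i)) ∧
    ∀ i j, i ≠ j → (P i).Disjoint (P j)

/-- The (loop-free, simple) quotient of the inter-component edges `F` under the
component map `h`. -/
def quotE {V' : Type*} (h : V → V') (F : Set (V × V)) : Set (V' × V') :=
  {q | ∃ e ∈ F, h e.1 = q.1 ∧ h e.2 = q.2 ∧ q.1 ≠ q.2}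

/-- A solution to 2EC-C: a strongly connected spanning subgraph with the same
2-edge-connected components. -/
def IsSolutionC (E E' : Set (V × V)) : Prop :=
  E' ⊆ E ∧ StronglyConnected E' ∧
    ∀ C : Set V, Is2ECComponent E C ↔ Is2ECComponent E' C

/-- One step of the deletion process: delete an edge `(x,y)` such that two
edge-disjoint `x → y` paths remain. -/
def DelStep (E₁ E₂ : Set (V × V)) : Prop :=
  ∃ x y : V, (x, y) ∈ E₁ ∧ E₂ = E₁ \ {(x, y)} ∧ TwoEDP E₂ x y

/-!
Every auxiliary vertex of `G_r` outside `T(r)` stands for a set of vertices of `G` with a single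
gate edge, a bridge of `G(s)`: for a marked child `x` of `T(r)` the set of vertices dominated by
`x`, entered only through the bridge into `x`; for `d(r)` the set of vertices not dominated by `r`,
left only through the bridge into `r`. A walk of `G`, or of `G_r`, between two vertices of `T(r)`
that visits such a set uses its gate edge, so two edge-disjoint walks never both visit one of
these sets. Hence contracting a walk of `G`, and lifting a walk of `G_r` through walks inside
the contracted sets, both preserve edge-disjointness.

For the blocks: a walk from outside the dominator subtree of a marked vertex `x` into it uses the
bridge into `x`, so two edge-disjoint walks from `w` to `u` force every marked dominator of `u` to
dominate `w`.
-/

section Walks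

variable {E F : Set (V × V)} {a b c v x : V} {p q : List (V × V)}

theorem Reaches.refl (a : V) : Reaches E a a := ⟨[], .nil a⟩

theorem Reaches.cons (hab : (a, b) ∈ E) : Reaches E b c → Reaches E a c
  | ⟨_, hp⟩ => ⟨_, .cons hab hp⟩

theorem IsWalk.append (hp : IsWalk E a b p) (hq : IsWalk E b c q) : IsWalk E a c (p ++ q) := by
  induction hp with
  | nil => exact hq
  | cons hab _ ih => exact .cons hab (ih hq)

theorem Reaches.trans : Reaches E a b → Reaches E b c → Reaches E a c
  | ⟨_, hp⟩, ⟨_, hq⟩ => ⟨_, hp.append hq⟩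

theorem Reaches.snoc (hab : Reaches E a b) (hbc : (b, c) ∈ E) : Reaches E a c :=
  hab.trans (.cons hbc (.refl c))

theorem IsWalk.mem (hp : IsWalk E a b p) {e : V × V} (he : e ∈ p) : e ∈ E := by
  induction hp with
  | nil => cases he
  | cons hab _ ih =>
    rcases List.mem_cons.1 he with rfl | he
    exacts [hab, ih he]

theorem IsWalk.of_forall_mem (hp : IsWalk E a b p) (hF : ∀ e ∈ p, e ∈ F) :
    IsWalk F a b p := by
  induction hp with
  | nil => exact .nil _
  | cons _ _ ih =>
    exact .cons (hF _ List.mem_cons_self) (ih fun e he => hF e (List.mem_cons_of_mem _ he))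

theorem IsWalk.mono (hp : IsWalk E a b p) (hEF : E ⊆ F) : IsWalk F a b p :=
  hp.of_forall_mem fun _ he => hEF (hp.mem he)

theorem Reaches.mono (hab : Reaches E a b) (hEF : E ⊆ F) : Reaches F a b :=
  let ⟨p, hp⟩ := hab; ⟨p, hp.mono hEF⟩

theorem IsWalk.reaches_edges (hp : IsWalk E a b p) : Reaches {e | e ∈ p} a b :=
  ⟨p, hp.of_forall_mem fun _ => id⟩

theorem OnWalk.cons (h : OnWalk b p x) : OnWalk a ((a, b) :: p) x := by
  rcases h with rfl | ⟨e, he, rfl⟩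
  · exact Or.inr ⟨_, List.mem_cons_self, rfl⟩
  · exact Or.inr ⟨e, List.mem_cons_of_mem _ he, rfl⟩

theorem IsWalk.onWalk_end (hp : IsWalk E a b p) : OnWalk a p b := by
  induction hp with
  | nil => exact Or.inl rfl
  | cons _ _ ih => exact ih.cons

theorem IsWalk.onWalk_fst (hp : IsWalk E a b p) {e : V × V} (he : e ∈ p) : OnWalk a p e.1 := by
  induction hp with
  | nil => cases he
  | cons _ _ ih =>
    rcases List.mem_cons.1 he with rfl | he
    exacts [Or.inl rfl, (ih he).cons]

theorem IsWalk.reaches_of_onWalk (hp : IsWalk E a b p) (hv : OnWalk a p v) :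
    Reaches {e | e ∈ p} a v ∧ Reaches {e | e ∈ p} v b := by
  induction hp with
  | nil =>
    obtain rfl | ⟨_, he, _⟩ := hv
    exacts [⟨.refl _, .refl _⟩, absurd he List.not_mem_nil]
  | @cons a b c p hab hp ih =>
    have hsub : {e | e ∈ p} ⊆ {e | e ∈ (a, b) :: p} := fun _ => List.mem_cons_of_mem _
    have hhead : (a, b) ∈ {e | e ∈ (a, b) :: p} := List.mem_cons_self
    rcases hv with rfl | ⟨e, he, rfl⟩
    · exact ⟨.refl _, .cons hhead (hp.reaches_edges.mono hsub)⟩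
    rcases List.mem_cons.1 he with rfl | he
    · exact ⟨.cons hhead (.refl _), hp.reaches_edges.mono hsub⟩
    · obtain ⟨h₁, h₂⟩ := ih (Or.inr ⟨e, he, rfl⟩)
      exact ⟨.cons hhead (h₁.mono hsub), h₂.mono hsub⟩

theorem IsWalk.to_restrictE {C : Set V} (hp : IsWalk E a b p)
    (hC : ∀ z, Reaches {e | e ∈ p} z b → z ∈ C) : IsWalk (restrictE E C) a b p :=
  hp.of_forall_mem fun e he =>
    ⟨hp.mem he, hC _ (hp.reaches_of_onWalk (hp.onWalk_fst he)).2,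
      hC _ (hp.reaches_of_onWalk (Or.inr ⟨e, he, rfl⟩)).2⟩

def avoiding (E : Set (V × V)) (u : V) : Set (V × V) := {e ∈ E | e.2 ≠ u}

theorem Reaches.exists_entering {S : Set V} (hab : Reaches E a b) (ha : a ∉ S) (hb : b ∈ S) :
    ∃ z y, Reaches (restrictE E Sᶜ) a z ∧ z ∉ S ∧ (z, y) ∈ E ∧ y ∈ S := by
  obtain ⟨p, hp⟩ := hab
  induction hp with
  | nil => exact absurd hb ha
  | @cons a v b p hav _ ih =>
    by_cases hv : v ∈ S
    · exact ⟨a, v, .refl a, ha, hav, hv⟩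
    · obtain ⟨z, y, hz, hzS, hzy, hy⟩ := ih hv hb
      exact ⟨z, y, .cons ⟨hav, ha, hv⟩ hz, hzS, hzy, hy⟩

theorem Reaches.avoiding_or (hav : Reaches E a v) (b : V) :
    Reaches (avoiding E b) a v ∨ Reaches (avoiding E b) b v := by
  obtain ⟨p, hp⟩ := hav
  induction hp with
  | nil => exact Or.inl (.refl _)
  | @cons a c v p hac _ ih =>
    rcases ih with h | h
    · by_cases hcb : c = b
      · exact Or.inr (hcb ▸ h)
      · exact Or.inl (.cons ⟨hac, hcb⟩ h)
    · exact Or.inr h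

theorem Reaches.loopless (hab : Reaches E a b) : Reaches {e ∈ E | e.1 ≠ e.2} a b := by
  obtain ⟨p, hp⟩ := hab
  induction hp with
  | nil => exact .refl _
  | @cons a c b p hac _ ih =>
    by_cases h : a = c
    · exact h ▸ ih
    · exact .cons ⟨hac, h⟩ ih

end Walks

section Dominators

variable {E F : Set (V × V)} {s u v w x y z : V}

theorem not_dom_iff : ¬ Dom E s u w ↔ u ≠ s ∧ Reaches (avoiding E u) s w := by
  constructor
  · intro h
    simp only [Dom, OnWalk, not_forall, not_or, not_exists, not_and] at h
    obtain ⟨p, hp, hus, hpu⟩ := h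
    exact ⟨hus, p, hp.of_forall_mem fun e he => ⟨hp.mem he, hpu e he⟩⟩
  · rintro ⟨hus, p, hp⟩ hd
    rcases hd p (hp.mono fun _ he => he.1) with h | ⟨e, he, rfl⟩
    exacts [hus h, (hp.mem he).2 rfl]

theorem Dom.reaches (h : Dom E s y z) (hF : F ⊆ E) (hz : Reaches F s z) : Reaches F s y :=
  let ⟨p, hp⟩ := hz
  (hp.reaches_of_onWalk (h p (hp.mono hF))).1.mono fun _ => hp.mem

theorem dom_source (w : V) : Dom E s s w := fun _ _ => Or.inl rfl

theorem dom_refl (v : V) : Dom E s v v := fun _ hp => hp.onWalk_end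

theorem eq_source_of_dom_source (h : Dom E s y s) : y = s :=
  (h [] (.nil s)).resolve_right fun ⟨_, he, _⟩ => List.not_mem_nil he

theorem PDom.ne_source (h : PDom E s x y) : y ≠ s := by
  rintro rfl
  exact h.2 (eq_source_of_dom_source h.1)

theorem Dom.trans (hxy : Dom E s x y) (hyz : Dom E s y z) : Dom E s x z := by
  by_contra h
  obtain ⟨hxs, hz⟩ := not_dom_iff.1 h
  exact not_dom_iff.2 ⟨hxs, hyz.reaches (fun _ he => he.1) hz⟩ hxy

theorem Dom.antisymm (hxy : Dom E s x y) (hyx : Dom E s y x) (hy : Reaches E s y) : x = y := by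
  by_contra hne
  have hxs : x ≠ s := by
    rintro rfl
    exact hne (eq_source_of_dom_source hyx).symm
  have hys : y ≠ s := by
    rintro rfl
    exact hne (eq_source_of_dom_source hxy)
  obtain ⟨z, t, hz, -, hzt, ht⟩ :=
    hy.exists_entering (S := {x, y}) (by simp [hxs.symm, hys.symm]) (by simp)
  have avoid {u} (hu : u ∈ ({x, y} : Set V)) : restrictE E {x, y}ᶜ ⊆ avoiding E u :=
    fun e he => ⟨he.1, fun h => he.2.2 (h ▸ hu)⟩
  rcases ht with rfl | rfl
  · exact not_dom_iff.2 ⟨hys, (hz.mono (avoid (by simp))).snoc ⟨hzt, hne⟩⟩ hyx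
  · exact not_dom_iff.2 ⟨hxs, (hz.mono (avoid (by simp))).snoc ⟨hzt, Ne.symm hne⟩⟩ hxy

theorem Dom.total (hxv : Dom E s x v) (hyv : Dom E s y v) (hv : Reaches E s v) :
    Dom E s x y ∨ Dom E s y x := by
  by_contra! h
  obtain ⟨hxs, hxy⟩ := not_dom_iff.1 h.1
  obtain ⟨hys, hyx⟩ := not_dom_iff.1 h.2
  -- after its last visit to `y`, a walk from `s` to `v` must still visit `x`
  have hyv' : Reaches (avoiding E y) y v :=
    (hv.avoiding_or y).resolve_left fun h' => not_dom_iff.2 ⟨hys, h'⟩ hyv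
  rcases hyv'.avoiding_or x with h' | h'
  · exact not_dom_iff.2 ⟨hxs, hxy.trans (h'.mono fun _ he => ⟨he.1.1, he.2⟩)⟩ hxv
  · exact not_dom_iff.2 ⟨hys, hyx.trans (h'.mono fun _ he => he.1)⟩ hyv

theorem dominators_finite (hv : Reaches E s v) : {x | Dom E s x v}.Finite := by
  obtain ⟨p, hp⟩ := hv
  refine ((p.map Prod.snd).finite_toSet.insert s).subset fun x hx => ?_
  rcases hx p hp with rfl | ⟨e, he, rfl⟩
  · exact Set.mem_insert _ _
  · exact Set.mem_insert_of_mem _ (List.mem_map_of_mem he)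

theorem exists_greatest_dominator {S : Set V} (hv : Reaches E s v) (hS : ∀ x ∈ S, Dom E s x v)
    (hne : S.Nonempty) : ∃ d ∈ S, ∀ x ∈ S, Dom E s x d := by
  obtain ⟨d, hd, hmax⟩ := ((dominators_finite hv).subset hS).exists_maximalFor
    (fun x => {y | Dom E s y x}) S hne
  refine ⟨d, hd, fun x hx => ?_⟩
  rcases (hS x hx).total (hS d hd) hv with h | h
  exacts [h, hmax hx (fun y hy => hy.trans h) (dom_refl x)]

theorem exists_least_dominator {S : Set V} (hv : Reaches E s v) (hS : ∀ x ∈ S, Dom E s x v)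
    (hne : S.Nonempty) : ∃ m ∈ S, ∀ x ∈ S, Dom E s m x := by
  obtain ⟨m, hm, hmin⟩ := ((dominators_finite hv).subset hS).exists_minimalFor
    (fun x => {y | Dom E s y x}) S hne
  refine ⟨m, hm, fun x hx => ?_⟩
  rcases (hS m hm).total (hS x hx) hv with h | h
  exacts [h, hmin hx (fun y hy => hy.trans h) (dom_refl m)]

theorem exists_idom (hv : Reaches E s v) (hvs : v ≠ s) : ∃ d, Idom E s d v :=
  exists_greatest_dominator hv (S := {x | PDom E s x v}) (fun _ hx => hx.1)
    ⟨s, dom_source v, hvs.symm⟩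

theorem Idom.unique (hx : Idom E s x v) (hy : Idom E s y v) (hv : Reaches E s v) : x = y :=
  (hy.2 x hx.1).antisymm (hx.2 y hy.1) (hy.1.1.reaches subset_rfl hv)

end Dominators

section Bridges

variable {E F : Set (V × V)} {s a b t u v w x : V} {e : V × V}

theorem IsBridge.not_reaches (h : IsBridge E s e) : ¬ Reaches (E \ {e}) s e.2 :=
  fun ⟨p, hp⟩ => (hp.mem (h.2 p (hp.mono Set.sdiff_subset))).2 rfl

theorem IsBridge.eq_of_not_dom_of_dom (h : IsBridge E s e) (ha : ¬ Dom E s e.2 a)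
    (hb : Dom E s e.2 b) (hab : (a, b) ∈ E) : (a, b) = e := by
  obtain ⟨hs, hsa⟩ := not_dom_iff.1 ha
  have hbe : b = e.2 := by
    by_contra hbe
    exact not_dom_iff.2 ⟨hs, hsa.snoc ⟨hab, hbe⟩⟩ hb
  by_contra hne
  have hsub : avoiding E e.2 ⊆ E \ {e} := fun f hf => ⟨hf.1, fun hfe => hf.2 (by rw [hfe])⟩
  exact h.not_reaches (hbe ▸ (hsa.mono hsub).snoc (show (a, b) ∈ E \ {e} from ⟨hab, hne⟩))

theorem IsBridge.mem_of_reaches (h : IsBridge E s e) (hF : F ⊆ E) (ha : ¬ Dom E s e.2 a)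
    (hb : Dom E s e.2 b) (hab : Reaches F a b) : e ∈ F := by
  obtain ⟨z, y, -, hz, hzy, hy⟩ := hab.exists_entering (S := {x | Dom E s e.2 x}) ha hb
  exact h.eq_of_not_dom_of_dom hz hy (hF hzy) ▸ hzy

theorem IsBridge.reaches_restrictE_dom (hSC : StronglyConnected E) (h : IsBridge E s e)
    (hv : Dom E s e.2 v) : Reaches (restrictE E {x | Dom E s e.2 x}) e.2 v := by
  have hes : e.2 ≠ s := fun hes => h.not_reaches (by rw [hes]; exact .refl s)
  obtain ⟨p, hp⟩ :=
    ((hSC s v).avoiding_or e.2).resolve_left fun h' => not_dom_iff.2 ⟨hes, h'⟩ hv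
  refine ⟨p, (hp.to_restrictE fun z hz => ?_).mono fun _ hf => ⟨hf.1.1, hf.2⟩⟩
  by_contra hnz
  exact (hp.mem (h.mem_of_reaches (fun _ hf => (hp.mem hf).1) hnz hv hz)).2 rfl

theorem IsBridge.reaches_restrictE_not_dom (hSC : StronglyConnected E) (h : IsBridge E s e)
    (ht : ¬ Dom E s e.2 t) : Reaches (restrictE E {x | ¬ Dom E s e.2 x}) t e.1 := by
  obtain ⟨z, y, hz, hzS, hzy, hy⟩ :=
    (hSC t e.2).exists_entering (S := {x | Dom E s e.2 x}) ht (dom_refl _)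
  obtain rfl := h.eq_of_not_dom_of_dom hzS hy hzy
  exact hz

theorem Dom.of_twoEDP (hx : Marked E s x) (hxu : Dom E s x u) (h : TwoEDP E w u) :
    Dom E s x w := by
  by_contra hxw
  obtain ⟨e, he, rfl⟩ := hx.resolve_left (not_dom_iff.1 hxw).1
  obtain ⟨p, q, hp, hq, hpq⟩ := h
  exact hpq (he.mem_of_reaches (fun _ => hp.mem) hxw hxu hp.reaches_edges)
    (he.mem_of_reaches (fun _ => hq.mem) hxw hxu hq.reaches_edges)

theorem InTree.of_twoEC {r : V} (hu : InTree E s r u) (h : TwoEC E u w) : InTree E s r w :=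
  ⟨hu.1, hu.2.1.of_twoEDP hu.1 h.2, fun x hx hxw => hu.2.2 x hx (hxw.of_twoEDP hx h.1)⟩

end Bridges

section Contraction

variable {E : Set (V × V)} {s r u v x y α β : V}

/-- `x` is the root of a tree of the canonical decomposition whose parent tree is `T(r)`;
these are the auxiliary vertices of `G_r` other than `d(r)`. -/
def IsChildRoot (E : Set (V × V)) (s r x : V) : Prop :=
  Marked E s x ∧ ∃ d, InTree E s r d ∧ Idom E s d x

theorem IsChildRoot.ne_source (hx : IsChildRoot E s r x) : x ≠ s :=
  let ⟨_, _, _, hd⟩ := hx; hd.1.ne_source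

theorem IsChildRoot.root_dom (hx : IsChildRoot E s r x) : Dom E s r x :=
  let ⟨_, _, hd, hdx⟩ := hx; hd.2.1.trans hdx.1.1

theorem IsChildRoot.not_dom_of_inTree (hSC : StronglyConnected E) (hx : IsChildRoot E s r x)
    (hu : InTree E s r u) : ¬ Dom E s x u := by
  intro hxu
  obtain ⟨hm, d, hd, hdx⟩ := hx
  have hxr : x = r := (hu.2.2 x hm hxu).antisymm (hd.2.1.trans hdx.1.1) (hSC s r)
  subst hxr
  exact hdx.1.2 (hdx.1.1.antisymm hd.2.1 (hSC s x))

theorem IsChildRoot.not_inTree (hSC : StronglyConnected E) (hx : IsChildRoot E s r x) :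
    ¬ InTree E s r x :=
  fun h => hx.not_dom_of_inTree hSC h (dom_refl x)

theorem IsChildRoot.eq_of_dom (hSC : StronglyConnected E) (hx : IsChildRoot E s r x)
    (hy : IsChildRoot E s r y) (hxv : Dom E s x v) (hyv : Dom E s y v) : x = y := by
  by_contra hne
  rcases hxv.total hyv (hSC s v) with h | h
  · obtain ⟨-, d, hd, hdy⟩ := hy
    exact hx.not_dom_of_inTree hSC hd (hdy.2 x ⟨h, hne⟩)
  · obtain ⟨-, d, hd, hdx⟩ := hx
    exact hy.not_dom_of_inTree hSC hd (hdx.2 y ⟨h, Ne.symm hne⟩)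

theorem Idom.not_inTree (hSC : StronglyConnected E) (ho : Idom E s α r) : ¬ InTree E s r α :=
  fun h => ho.1.2 (ho.1.1.antisymm h.2.1 (hSC s r))

theorem Idom.not_isChildRoot (hSC : StronglyConnected E) (ho : Idom E s α r) :
    ¬ IsChildRoot E s r α :=
  fun h => ho.1.2 (ho.1.1.antisymm h.root_dom (hSC s r))

theorem contractsTo_iff_of_inTree (hv : InTree E s r v) : ContractsTo E s r v α ↔ α = v := by
  simp [ContractsTo, hv, hv.2.1]

theorem contractsTo_iff_of_dom (hrv : Dom E s r v) (hv : ¬ InTree E s r v) :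
    ContractsTo E s r v α ↔ IsChildRoot E s r α ∧ Dom E s α v := by
  simp [ContractsTo, IsChildRoot, hrv, hv]
  tauto

theorem contractsTo_iff_of_not_dom (hrv : ¬ Dom E s r v) :
    ContractsTo E s r v α ↔ Idom E s α r := by
  have hv : ¬ InTree E s r v := fun h => hrv h.2.1
  simp [ContractsTo, hrv, hv]

theorem ContractsTo.inTree_or (h : ContractsTo E s r v α) :
    InTree E s r α ∨ IsChildRoot E s r α ∨ Idom E s α r := by
  rcases h with ⟨hv, rfl⟩ | ⟨-, -, hα, -, hd⟩ | ⟨-, hα⟩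
  exacts [Or.inl hv, Or.inr (Or.inl ⟨hα, hd⟩), Or.inr (Or.inr hα)]

theorem ContractsTo.eq_of_inTree (hSC : StronglyConnected E) (h : ContractsTo E s r v α)
    (hα : InTree E s r α) : v = α := by
  rcases h with ⟨-, rfl⟩ | ⟨-, -, hm, -, hd⟩ | ⟨-, ho⟩
  exacts [rfl, absurd hα (IsChildRoot.not_inTree hSC ⟨hm, hd⟩), absurd hα (ho.not_inTree hSC)]

theorem contractsTo_iff_of_isChildRoot (hSC : StronglyConnected E) (hx : IsChildRoot E s r x) :
    ContractsTo E s r v x ↔ Dom E s x v := by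
  refine ⟨fun h => ?_, fun h => Or.inr (Or.inl ⟨hx.root_dom.trans h,
    fun hv => hx.not_dom_of_inTree hSC hv h, hx.1, h, hx.2⟩)⟩
  rcases h with ⟨-, rfl⟩ | ⟨-, -, -, h, -⟩ | ⟨-, ho⟩
  exacts [dom_refl x, h, absurd hx (ho.not_isChildRoot hSC)]

theorem contractsTo_iff_of_idom (hSC : StronglyConnected E) (ho : Idom E s α r) :
    ContractsTo E s r v α ↔ ¬ Dom E s r v := by
  refine ⟨fun h => ?_, fun h => Or.inr (Or.inr ⟨h, ho⟩)⟩
  rcases h with ⟨hv, rfl⟩ | ⟨-, -, hm, -, hd⟩ | ⟨h, -⟩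
  exacts [absurd hv (ho.not_inTree hSC), absurd ⟨hm, hd⟩ (ho.not_isChildRoot hSC), h]

theorem ContractsTo.unique (hSC : StronglyConnected E) (hα : ContractsTo E s r v α)
    (hβ : ContractsTo E s r v β) : α = β := by
  by_cases hv : InTree E s r v
  · rw [contractsTo_iff_of_inTree hv] at hα hβ
    exact hα.trans hβ.symm
  by_cases hrv : Dom E s r v
  · rw [contractsTo_iff_of_dom hrv hv] at hα hβ
    exact hα.1.eq_of_dom hSC hβ.1 hα.2 hβ.2
  · rw [contractsTo_iff_of_not_dom hrv] at hα hβ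
    exact hα.unique hβ (hSC s r)

/-- The highest marked dominator of `v` below `T(r)` is a child root. -/
theorem exists_isChildRoot_dom (hSC : StronglyConnected E) (hr : Marked E s r)
    (hrv : Dom E s r v) (hv : ¬ InTree E s r v) : ∃ x, IsChildRoot E s r x ∧ Dom E s x v := by
  have : ¬ ∀ y, Marked E s y → Dom E s y v → Dom E s y r := fun h => hv ⟨hr, hrv, h⟩
  push Not at this
  obtain ⟨m, ⟨hm, hmv, hmr⟩, hleast⟩ := exists_least_dominator (hSC s v)
    (S := {y | Marked E s y ∧ Dom E s y v ∧ ¬ Dom E s y r}) (fun _ hy => hy.2.1) this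
  have hrm : Dom E s r m := (hmv.total hrv (hSC s v)).resolve_left hmr
  obtain ⟨d, hd⟩ := exists_idom (hSC s m) fun h => hmr (h ▸ dom_source r)
  refine ⟨m, ⟨hm, d, ⟨hr, hd.2 r ⟨hrm, ?_⟩, fun y hy hyd => ?_⟩, hd⟩, hmv⟩
  · rintro rfl
    exact hmr (dom_refl _)
  · by_contra hyr
    have hmy : Dom E s m y := hleast y ⟨hy, hyd.trans (hd.1.1.trans hmv), hyr⟩
    exact hd.1.2 (hd.1.1.antisymm (hmy.trans hyd) (hSC s m))

theorem contractsTo_total (hSC : StronglyConnected E) (hr : Marked E s r) (v : V) :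
    ∃ α, ContractsTo E s r v α := by
  by_cases hv : InTree E s r v
  · exact ⟨v, Or.inl ⟨hv, rfl⟩⟩
  by_cases hrv : Dom E s r v
  · obtain ⟨x, hx⟩ := exists_isChildRoot_dom hSC hr hrv hv
    exact ⟨x, (contractsTo_iff_of_dom hrv hv).2 hx⟩
  · obtain ⟨o, ho⟩ := exists_idom (hSC s r) fun h => hrv (h ▸ dom_source v)
    exact ⟨o, (contractsTo_iff_of_not_dom hrv).2 ho⟩

end Contraction

section Gates

variable {E : Set (V × V)} {s r u v w α : V}

theorem inTree_self (hr : Marked E s r) : InTree E s r r :=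
  ⟨hr, dom_refl r, fun _ _ h => h⟩

theorem exists_gate (hSC : StronglyConnected E) (hu : InTree E s r u) (hw : InTree E s r w)
    (hα : ContractsTo E s r v α) (hαT : ¬ InTree E s r α) :
    ∃ g, ∀ F ⊆ E, ∀ x, ContractsTo E s r x α →
      Reaches F u x → Reaches F x w → g ∈ F := by
  rcases hα.inTree_or with h | hα | hα
  · exact absurd h hαT
  · obtain ⟨e, he, rfl⟩ := hα.1.resolve_left hα.ne_source
    exact ⟨e, fun F hF x hx hux _ => he.mem_of_reaches hF (hα.not_dom_of_inTree hSC hu)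
      ((contractsTo_iff_of_isChildRoot hSC hα).1 hx) hux⟩
  · obtain ⟨e, he, rfl⟩ := hu.1.resolve_left hα.1.ne_source
    exact ⟨e, fun F hF x hx _ hxw => he.mem_of_reaches hF
      ((contractsTo_iff_of_idom hSC hα).1 hx) hw.2.1 hxw⟩

theorem exists_auxGate (hSC : StronglyConnected E) (hu : InTree E s r u) (hw : InTree E s r w)
    (hα : ContractsTo E s r v α) (hαT : ¬ InTree E s r α) :
    ∃ g, ∀ F ⊆ AuxE E s r, Reaches F u α → Reaches F α w → g ∈ F := by
  rcases hα.inTree_or with h | hα | hα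
  · exact absurd h hαT
  · have hdom (x : V) : ContractsTo E s r x α ↔ Dom E s α x :=
      contractsTo_iff_of_isChildRoot hSC hα
    obtain ⟨e, he, rfl⟩ := hα.1.resolve_left hα.ne_source
    obtain ⟨γ, hγ⟩ := contractsTo_total hSC hu.1 e.1
    refine ⟨(γ, e.2), fun F hF huα _ => ?_⟩
    obtain ⟨z, y, -, hz, hzy, rfl⟩ :=
      huα.exists_entering (S := {e.2}) (fun h => hαT (h ▸ hu)) rfl
    obtain ⟨a, b, hab, ha, hb⟩ := hF hzy
    have hna : ¬ Dom E s e.2 a := fun h => hz (ha.unique hSC ((hdom a).2 h))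
    obtain rfl := he.eq_of_not_dom_of_dom hna ((hdom b).1 hb) hab
    rwa [hγ.unique hSC ha]
  · have hdom (x : V) : ContractsTo E s r x α ↔ ¬ Dom E s r x :=
      contractsTo_iff_of_idom hSC hα
    refine ⟨(α, r), fun F hF _ hαw => ?_⟩
    obtain ⟨z, y, -, hz, hzy, hy⟩ :=
      hαw.exists_entering (S := {x | x ≠ α}) (by simp) fun h => hαT (h ▸ hw)
    obtain rfl : z = α := not_not.1 hz
    obtain ⟨a, b, hab, ha, hb⟩ := hF hzy
    have hrb : Dom E s r b := by_contra fun h => hy (hb.unique hSC ((hdom b).2 h))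
    have hyr : y = r := by
      obtain ⟨e, he, rfl⟩ := hu.1.resolve_left hα.1.ne_source
      obtain rfl := he.eq_of_not_dom_of_dom ((hdom a).1 ha) hrb hab
      exact (contractsTo_iff_of_inTree (inTree_self hu.1)).1 hb
    exact hyr ▸ hzy

end Gates

section Contracting

variable {E : Set (V × V)} {s r u w : V}

theorem IsWalk.map_contractsTo {f : V → V} (hf : ∀ v, ContractsTo E s r v (f v)) {a b : V}
    {p : List (V × V)} (hp : IsWalk E a b p) :
    IsWalk (AuxE E s r) (f a) (f b) (p.map (Prod.map f f)) := by
  induction hp with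
  | nil => exact .nil _
  | cons hab _ ih => exact .cons ⟨_, _, hab, hf _, hf _⟩ ih

theorem eq_of_onWalk_of_disjoint (hSC : StronglyConnected E) (hu : InTree E s r u)
    (hw : InTree E s r w) {p q : List (V × V)} (hp : IsWalk E u w p) (hq : IsWalk E u w q)
    (hpq : p.Disjoint q) {v v' α : V} (hv : OnWalk u p v) (hv' : OnWalk u q v')
    (hvα : ContractsTo E s r v α) (hv'α : ContractsTo E s r v' α) : v = v' := by
  by_cases hα : InTree E s r α
  · exact (hvα.eq_of_inTree hSC hα).trans (hv'α.eq_of_inTree hSC hα).symm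
  obtain ⟨g, hg⟩ := exists_gate hSC hu hw hvα hα
  exact absurd (hg _ (fun _ => hq.mem) v' hv'α (hq.reaches_of_onWalk hv').1
    (hq.reaches_of_onWalk hv').2) (hpq (hg _ (fun _ => hp.mem) v hvα
      (hp.reaches_of_onWalk hv).1 (hp.reaches_of_onWalk hv).2))

theorem twoEDP_auxE_of_twoEDP (hSC : StronglyConnected E) (hu : InTree E s r u)
    (hw : InTree E s r w) (h : TwoEDP E u w) : TwoEDP (AuxE E s r) u w := by
  obtain ⟨p, q, hp, hq, hpq⟩ := h
  choose f hf using contractsTo_total hSC hu.1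
  have hfu : f u = u := (contractsTo_iff_of_inTree hu).1 (hf u)
  have hfw : f w = w := (contractsTo_iff_of_inTree hw).1 (hf w)
  refine ⟨p.map (Prod.map f f), q.map (Prod.map f f), ?_, ?_, fun g hgp hgq => ?_⟩
  · simpa [hfu, hfw] using hp.map_contractsTo hf
  · simpa [hfu, hfw] using hq.map_contractsTo hf
  obtain ⟨e, he, rfl⟩ := List.mem_map.1 hgp
  obtain ⟨e', he', hee'⟩ := List.mem_map.1 hgq
  have hf₁ : f e'.1 = f e.1 := congrArg Prod.fst hee'
  have hf₂ : f e'.2 = f e.2 := congrArg Prod.snd hee'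
  have h₁ := eq_of_onWalk_of_disjoint hSC hu hw hp hq hpq (hp.onWalk_fst he)
    (hq.onWalk_fst he') (hf e.1) (hf₁ ▸ hf e'.1)
  have h₂ := eq_of_onWalk_of_disjoint hSC hu hw hp hq hpq (Or.inr ⟨e, he, rfl⟩)
    (Or.inr ⟨e', he', rfl⟩) (hf e.2) (hf₂ ▸ hf e'.2)
  exact hpq he (Prod.ext h₁ h₂ ▸ he')

end Contracting

section Lifting

variable {E : Set (V × V)} {s r u w t a b α β : V}

/-- `hentry` says that `t` is a vertex through which the set contracted into `β` can be entered:
`β` itself, unless that set is the complement of the dominator subtree of `r`. -/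
theorem exists_walk_within_contractsTo (hSC : StronglyConnected E) (hr : Marked E s r)
    (ht : ContractsTo E s r t β) (hentry : Dom E s r t → t = β) (hab : (a, b) ∈ E)
    (ha : ContractsTo E s r a β) (hb : ContractsTo E s r b α) (hβα : β ≠ α) :
    ∃ m, IsWalk E t a m ∧ ∀ e ∈ m,
      ¬ InTree E s r β ∧ ContractsTo E s r e.1 β ∧ ContractsTo E s r e.2 β := by
  rcases ht.inTree_or with hβ | hβ | hβ
  · obtain rfl := ht.eq_of_inTree hSC hβ
    obtain rfl := ha.eq_of_inTree hSC hβ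
    exact ⟨[], .nil _, by simp⟩
  · have hdom (x : V) : ContractsTo E s r x β ↔ Dom E s β x :=
      contractsTo_iff_of_isChildRoot hSC hβ
    obtain rfl := hentry (hβ.root_dom.trans ((hdom t).1 ht))
    obtain ⟨e, he, rfl⟩ := hβ.1.resolve_left hβ.ne_source
    obtain ⟨m, hm⟩ := he.reaches_restrictE_dom hSC ((hdom a).1 ha)
    exact ⟨m, hm.mono fun _ hf => hf.1, fun f hf =>
      ⟨hβ.not_inTree hSC, (hdom _).2 (hm.mem hf).2.1, (hdom _).2 (hm.mem hf).2.2⟩⟩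
  · have hdom (x : V) : ContractsTo E s r x β ↔ ¬ Dom E s r x :=
      contractsTo_iff_of_idom hSC hβ
    have hrb : Dom E s r b := by_contra fun h => hβα (((hdom b).2 h).unique hSC hb)
    obtain ⟨e, he, rfl⟩ := hr.resolve_left hβ.1.ne_source
    obtain rfl := he.eq_of_not_dom_of_dom ((hdom a).1 ha) hrb hab
    obtain ⟨m, hm⟩ := he.reaches_restrictE_not_dom hSC ((hdom t).1 ht)
    exact ⟨m, hm.mono fun _ hf => hf.1, fun f hf =>
      ⟨hβ.not_inTree hSC, (hdom _).2 (hm.mem hf).2.1, (hdom _).2 (hm.mem hf).2.2⟩⟩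

theorem eq_of_contractsTo_of_mem (hSC : StronglyConnected E) (hab : (a, b) ∈ E)
    (ha : ContractsTo E s r a β) (hb : ContractsTo E s r b α) (hβα : β ≠ α)
    (hrb : Dom E s r b) : b = α := by
  rcases hb.inTree_or with hα | hα | hα
  · exact hb.eq_of_inTree hSC hα
  · have hdom (x : V) : ContractsTo E s r x α ↔ Dom E s α x :=
      contractsTo_iff_of_isChildRoot hSC hα
    obtain ⟨e, he, rfl⟩ := hα.1.resolve_left hα.ne_source
    have hna : ¬ Dom E s e.2 a := fun h => hβα (ha.unique hSC ((hdom a).2 h))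
    exact congrArg Prod.snd (he.eq_of_not_dom_of_dom hna ((hdom b).1 hb) hab)
  · exact absurd hrb ((contractsTo_iff_of_idom hSC hα).1 hb)

theorem exists_lift (hSC : StronglyConnected E) (hr : Marked E s r) (hw : InTree E s r w)
    {P : List (V × V)} (hP : IsWalk (AuxE E s r) β w P) (hloop : ∀ g ∈ P, g.1 ≠ g.2)
    (ht : ContractsTo E s r t β) (hentry : Dom E s r t → t = β) :
    ∃ q, IsWalk E t w q ∧ ∀ e ∈ q, ∃ g,
      (ContractsTo E s r e.1 g.1 ∧ ContractsTo E s r e.2 g.2) ∧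
        (g ∈ P ∨ g.1 = g.2 ∧ ¬ InTree E s r g.1 ∧ OnWalk β P g.1) := by
  induction hP generalizing t with
  | nil =>
    obtain rfl := ht.eq_of_inTree hSC hw
    exact ⟨[], .nil _, by simp⟩
  | @cons β α w P hβα _ ih =>
    obtain ⟨a, b, hab, ha, hb⟩ := hβα
    have hne : β ≠ α := hloop _ List.mem_cons_self
    obtain ⟨m, hm, hmβ⟩ := exists_walk_within_contractsTo hSC hr ht hentry hab ha hb hne
    obtain ⟨q, hq, hqP⟩ := ih hw (fun g hg => hloop g (List.mem_cons_of_mem _ hg)) hb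
      (eq_of_contractsTo_of_mem hSC hab ha hb hne)
    refine ⟨m ++ (a, b) :: q, hm.append (.cons hab hq), fun e he => ?_⟩
    rcases List.mem_append.1 he with he | he
    · obtain ⟨hβT, h₁, h₂⟩ := hmβ e he
      exact ⟨(β, β), ⟨h₁, h₂⟩, Or.inr ⟨rfl, hβT, Or.inl rfl⟩⟩
    rcases List.mem_cons.1 he with rfl | he
    · exact ⟨(β, α), ⟨ha, hb⟩, Or.inl List.mem_cons_self⟩
    obtain ⟨g, hg, hgP | ⟨hg₁, hgT, hgP⟩⟩ := hqP e he
    · exact ⟨g, hg, Or.inl (List.mem_cons_of_mem _ hgP)⟩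
    · exact ⟨g, hg, Or.inr ⟨hg₁, hgT, hgP.cons⟩⟩

theorem twoEDP_of_twoEDP_auxE (hSC : StronglyConnected E) (hu : InTree E s r u)
    (hw : InTree E s r w) (h : TwoEDP (AuxE E s r) u w) : TwoEDP E u w := by
  obtain ⟨P, Q, hP, hQ, hPQ⟩ := h
  obtain ⟨P', hP'⟩ := hP.reaches_edges.loopless
  obtain ⟨Q', hQ'⟩ := hQ.reaches_edges.loopless
  have huu : ContractsTo E s r u u := Or.inl ⟨hu, rfl⟩
  obtain ⟨p, hp, hpP⟩ := exists_lift hSC hu.1 hw (hP'.mono fun g hg => hP.mem hg.1)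
    (fun g hg => (hP'.mem hg).2) huu fun _ => rfl
  obtain ⟨q, hq, hqQ⟩ := exists_lift hSC hu.1 hw (hQ'.mono fun g hg => hQ.mem hg.1)
    (fun g hg => (hQ'.mem hg).2) huu fun _ => rfl
  refine ⟨p, q, hp, hq, fun e hep heq => ?_⟩
  obtain ⟨g, hg, hgP⟩ := hpP e hep
  obtain ⟨g', hg', hgQ⟩ := hqQ e heq
  obtain rfl : g = g' := Prod.ext (hg.1.unique hSC hg'.1) (hg.2.unique hSC hg'.2)
  rcases hgP with hgP | ⟨hloopP, hgT, hvisP⟩ <;> rcases hgQ with hgQ | ⟨hloopQ, -, hvisQ⟩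
  · exact hPQ (hP'.mem hgP).1 (hQ'.mem hgQ).1
  · exact (hP'.mem hgP).2 hloopQ
  · exact (hQ'.mem hgQ).2 hloopP
  · obtain ⟨k, hk⟩ := exists_auxGate hSC hu hw hg.1 hgT
    have hkP := hk _ (fun _ hf => hP.mem (hP'.mem hf).1) (hP'.reaches_of_onWalk hvisP).1
      (hP'.reaches_of_onWalk hvisP).2
    have hkQ := hk _ (fun _ hf => hQ.mem (hQ'.mem hf).1) (hQ'.reaches_of_onWalk hvisQ).1
      (hQ'.reaches_of_onWalk hvisQ).2
    exact hPQ (hP'.mem hkP).1 (hQ'.mem hkQ).1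

end Lifting

theorem stmt15_general (E : Set (V × V)) (s : V) (hSC : StronglyConnected E)
    (r : V) :
    (∀ u w : V, InTree E s r u → InTree E s r w →
      (TwoEC (AuxE E s r) u w ↔ TwoEC E u w)) ∧
    ∀ B : Set V, Is2ECBlock E B →
      ∀ u ∈ B, ∀ w ∈ B, ∀ r' : V, InTree E s r' u → InTree E s r' w := by
  refine ⟨fun u w hu hw => ⟨fun h => ⟨?_, ?_⟩, fun h => ⟨?_, ?_⟩⟩,
    fun B hB u hu w hw r' hr' => hr'.of_twoEC (hB.1 u hu w hw)⟩
  · exact twoEDP_of_twoEDP_auxE hSC hu hw h.1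
  · exact twoEDP_of_twoEDP_auxE hSC hw hu h.2
  · exact twoEDP_auxE_of_twoEDP hSC hu hw h.1
  · exact twoEDP_auxE_of_twoEDP hSC hw hu h.2

theorem stmt15 (E : Set (V × V)) (s : V) (hSC : StronglyConnected E)
    (r : V) (hr : Marked E s r) :
    (∀ u w : V, InTree E s r u → InTree E s r w →
      (TwoEC (AuxE E s r) u w ↔ TwoEC E u w)) ∧
    ∀ B : Set V, Is2ECBlock E B →
      ∀ u ∈ B, ∀ w ∈ B, ∀ r' : V, InTree E s r' u → InTree E s r' w :=
  stmt15_general E s hSC r
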